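/- Let p be a prime, S a finite p-group, and X a finite bifree (S,S)-biset. Let P < Q ≤ S with P of index p in Q, and let φ: P → S be an injective homomorphism that extends to a group homomorphism Q → S. Then |X^{(P,φ)}|/|C_S(φ(P))| ≡ Σ_{[ψ]} |X^{(Q,ψ)}|/|C_S(ψ(Q))| modulo p, where [ψ] ranges over a set of representatives of the S-conjugacy classes of injective homomorphisms ψ: Q → S whose restriction to P is S-conjugate to φ (here both |X^{(P,φ)}| and each |X^{(Q,ψ)}| are divisible by |C_S(φ(P))| and |C_S(ψ(Q))| respectively, so all terms are integers; ψ ∼ c_s∘ψ for s ∈ S). -/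

import Mathlib

/-! ## Bisets -/

/-- A `(G,H)`-biset structure on a type `X`: a left `H`-action and a right `G`-action
that commute with each other. -/
structure BisetAction (G H : Type*) [Group G] [Group H] (X : Type*) where
  /-- the left `H`-action -/
  smul : H → X → X
  /-- the right `G`-action -/
  rmul : X → G → X
  one_smul : ∀ x, smul 1 x = x
  mul_smul : ∀ h₁ h₂ x, smul (h₁ * h₂) x = smul h₁ (smul h₂ x)
  rmul_one : ∀ x, rmul x 1 = x
  rmul_mul : ∀ x g₁ g₂, rmul x (g₁ * g₂) = rmul (rmul x g₁) g₂
  smul_rmul : ∀ h x g, rmul (smul h x) g = smul h (rmul x g)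

namespace BisetAction

variable {G H K : Type*} [Group G] [Group H] [Group K] {X Y Z : Type*}

lemma smul_smul (A : BisetAction G H X) (h₁ h₂ : H) (x : X) :
    A.smul h₁ (A.smul h₂ x) = A.smul (h₁ * h₂) x := (A.mul_smul h₁ h₂ x).symm

lemma rmul_rmul (A : BisetAction G H X) (x : X) (g₁ g₂ : G) :
    A.rmul (A.rmul x g₁) g₂ = A.rmul x (g₁ * g₂) := (A.rmul_mul x g₁ g₂).symm

/-- The biset is left-free. -/
def LeftFree (A : BisetAction G H X) : Prop := ∀ (h : H) (x : X), A.smul h x = x → h = 1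

/-- The biset is right-free. -/
def RightFree (A : BisetAction G H X) : Prop := ∀ (g : G) (x : X), A.rmul x g = x → g = 1

/-- The biset is bifree: both actions are free. -/
def Bifree (A : BisetAction G H X) : Prop := A.LeftFree ∧ A.RightFree

/-- The fixed-point set `X^{(P,φ)} = {x | x·u = φ(u)·x for all u ∈ P}`. -/
def Fix (A : BisetAction G H X) (P : Subgroup G) (φ : P →* H) : Set X :=
  {x | ∀ u : P, A.rmul x u = A.smul (φ u) x}

/-- The opposite biset: same underlying set, with the two actions reversed
(`g·x·h` in `op A` is `h⁻¹·x·g⁻¹` in `A`). -/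
def op (A : BisetAction G H X) : BisetAction H G X where
  smul g x := A.rmul x g⁻¹
  rmul x h := A.smul h⁻¹ x
  one_smul x := by simpa using A.rmul_one x
  mul_smul g₁ g₂ x := by rw [mul_inv_rev, A.rmul_mul]
  rmul_one x := by simpa using A.one_smul x
  rmul_mul x h₁ h₂ := by rw [mul_inv_rev, A.mul_smul]
  smul_rmul g x h := (A.smul_rmul h⁻¹ x g⁻¹).symm

/-- The setoid of left `H`-orbits. -/
def leftOrbitSetoid (A : BisetAction G H X) : Setoid X where
  r x y := ∃ h : H, y = A.smul h x
  iseqv := by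
    refine ⟨fun x => ⟨1, (A.one_smul x).symm⟩, ?_, ?_⟩
    · rintro x y ⟨h, rfl⟩
      exact ⟨h⁻¹, by rw [A.smul_smul, inv_mul_cancel, A.one_smul]⟩
    · rintro x y z ⟨h₁, rfl⟩ ⟨h₂, rfl⟩
      exact ⟨h₂ * h₁, A.smul_smul h₂ h₁ x⟩

/-- The set of left `H`-orbits of the biset. -/
def leftOrbits (A : BisetAction G H X) : Type _ := Quotient (A.leftOrbitSetoid)

/-- Restricting the right action along a homomorphism `φ : P →* G`. -/
def restrictRight (A : BisetAction G H X) {P : Type*} [Group P] (φ : P →* G) :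
    BisetAction P H X where
  smul := A.smul
  rmul x u := A.rmul x (φ u)
  one_smul := A.one_smul
  mul_smul := A.mul_smul
  rmul_one x := by rw [map_one, A.rmul_one]
  rmul_mul x u₁ u₂ := by rw [map_mul, A.rmul_mul]
  smul_rmul h x u := A.smul_rmul h x (φ u)

/-- Restricting the left action along a homomorphism `φ : P →* H`. -/
def restrictLeft (A : BisetAction G H X) {P : Type*} [Group P] (φ : P →* H) :
    BisetAction G P X where
  smul u x := A.smul (φ u) x
  rmul := A.rmul
  one_smul x := by rw [map_one, A.one_smul]
  mul_smul u₁ u₂ x := by rw [map_mul, A.mul_smul]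
  rmul_one := A.rmul_one
  rmul_mul := A.rmul_mul
  smul_rmul u x g := A.smul_rmul (φ u) x g

end BisetAction

/-- An isomorphism of `(G,H)`-bisets: an equivalence of underlying sets commuting with
both actions. -/
structure BisetIso {G H : Type*} [Group G] [Group H] {X Y : Type*}
    (A : BisetAction G H X) (B : BisetAction G H Y) extends X ≃ Y where
  map_smul : ∀ (h : H) (x : X), toEquiv (A.smul h x) = B.smul h (toEquiv x)
  map_rmul : ∀ (x : X) (g : G), toEquiv (A.rmul x g) = B.rmul (toEquiv x) g

/-- Two homomorphisms `φ ψ : Q →* S` are `S`-conjugate if `ψ = c_s ∘ φ` for some `s ∈ S`. -/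
def HomSConj {S : Type*} [Group S] {Q : Subgroup S} (φ ψ : Q →* S) : Prop :=
  ∃ s : S, ∀ u : Q, ψ u = s * φ u * s⁻¹

/-- The restriction of `ψ : Q →* S` to `P ≤ Q` is `S`-conjugate to `φ : P →* S`. -/
def RestrictionSConj {S : Type*} [Group S] {P Q : Subgroup S} (hPQ : P ≤ Q)
    (ψ : Q →* S) (φ : P →* S) : Prop :=
  ∃ s : S, ∀ (u : S) (hu : u ∈ P), ψ ⟨u, hPQ hu⟩ = s * φ ⟨u, hu⟩ * s⁻¹

/-!
By left-freeness, `C_S(φ(P))` acts freely on `X^{(P,φ)}`, and its orbits are the traces of the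
left `S`-orbits meeting `X^{(P,φ)}`; so `|X^{(P,φ)}|/|C_S(φ(P))|` is the number of such
`S`-orbits. The right action of `Q` on `S\X` permutes these orbits, because `P ⊴ Q` and `φ`
extends to `φ' : Q → S` (the point `φ'(q)·x·q⁻¹` lies in `X^{(P,φ)}` again), so as `Q` is a
`p`-group their number is congruent mod `p` to the number of `Q`-fixed ones. An orbit `S·x`
is `Q`-fixed exactly when `x·Q ⊆ S·x`, i.e. when `x ∈ X^{(Q,ψ)}` for some `ψ`, necessarily
injective and restricting to a conjugate of `φ`; and `X^{(Q,ψ)}`, `X^{(Q,ψ')}` meet a common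
orbit only if `ψ` and `ψ'` are `S`-conjugate.
-/

theorem IsPGroup.normal_of_index_eq {p : ℕ} (hp : p.Prime) {G : Type*} [Group G] [Finite G]
    (hG : IsPGroup p G) {H : Subgroup G} (hH : H.index = p) : H.Normal := by
  have : Fact p.Prime := ⟨hp⟩
  obtain ⟨n, hn⟩ := IsPGroup.iff_card.mp hG
  have hn0 : n ≠ 0 := by
    rintro rfl
    rw [pow_zero, ← H.index_mul_card, hH] at hn
    exact hp.one_lt.ne' (Nat.eq_one_of_mul_eq_one_right hn)
  exact Subgroup.normal_of_index_eq_minFac_card (by rw [hH, hn, hp.pow_minFac hn0])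

namespace BisetAction

variable {X : Type*}

section

variable {G H : Type*} [Group G] [Group H]

lemma LeftFree.smul_left_cancel {A : BisetAction G H X} (hL : A.LeftFree) {a b : H} {x : X}
    (h : A.smul a x = A.smul b x) : a = b := by
  have : A.smul (b⁻¹ * a) x = x := by
    rw [A.mul_smul, h, A.smul_smul, inv_mul_cancel, A.one_smul]
  exact (inv_mul_eq_one.mp (hL _ _ this)).symm

variable (A : BisetAction G H X)

section Fix

variable {P : Subgroup G} {φ ψ : P →* H} {x : X}

lemma smul_mem_fix (hx : x ∈ A.Fix P φ) (h : H) (hψ : ∀ u, ψ u = h * φ u * h⁻¹) :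
    A.smul h x ∈ A.Fix P ψ := by
  intro u
  rw [A.smul_rmul, hx u, A.smul_smul, A.smul_smul, hψ u, inv_mul_cancel_right]

lemma smul_mem_fix_iff (hL : A.LeftFree) (hx : x ∈ A.Fix P φ) (h : H) :
    A.smul h x ∈ A.Fix P ψ ↔ ∀ u, ψ u = h * φ u * h⁻¹ := by
  refine ⟨fun hy u => hL.smul_left_cancel (x := A.smul h x) ?_, A.smul_mem_fix hx h⟩
  rw [← hy u, A.smul_rmul, hx u, A.smul_smul, A.smul_smul, inv_mul_cancel_right]

lemma smul_mem_fix_self_iff (hL : A.LeftFree) (hx : x ∈ A.Fix P φ) (h : H) :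
    A.smul h x ∈ A.Fix P φ ↔ h ∈ Subgroup.centralizer ((φ.range : Subgroup H) : Set H) := by
  rw [A.smul_mem_fix_iff hL hx, Subgroup.mem_centralizer_iff, MonoidHom.coe_range,
    Set.forall_mem_range]
  exact forall_congr' fun u => eq_mul_inv_iff_mul_eq

lemma mem_fix_comp_inclusion {Q : Subgroup G} (hPQ : P ≤ Q) {ψ : Q →* H} (hx : x ∈ A.Fix Q ψ) :
    x ∈ A.Fix P (ψ.comp (Subgroup.inclusion hPQ)) :=
  fun u => hx (Subgroup.inclusion hPQ u)

lemma injective_of_mem_fix (hR : A.RightFree) (hx : x ∈ A.Fix P φ) :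
    Function.Injective φ := by
  rw [injective_iff_map_eq_one]
  intro u hu
  exact Subtype.ext (hR u x (by rw [hx u, hu, A.one_smul]))

end Fix

section Orbits

def leftOrbit (x : X) : A.leftOrbits := Quotient.mk A.leftOrbitSetoid x

lemma leftOrbit_eq_leftOrbit_iff {x y : X} :
    A.leftOrbit x = A.leftOrbit y ↔ ∃ h : H, y = A.smul h x :=
  Quotient.eq

@[simp]
lemma leftOrbit_smul (h : H) (x : X) : A.leftOrbit (A.smul h x) = A.leftOrbit x :=
  Quotient.sound ⟨h⁻¹, by rw [A.smul_smul, inv_mul_cancel, A.one_smul]⟩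

instance [Finite X] : Finite A.leftOrbits := Quotient.finite _

/-- `G` acts on the left orbits through the right action: `g • (H·x) = H·(x·g⁻¹)`. -/
instance : MulAction G A.leftOrbits where
  smul g := Quotient.map (fun x => A.rmul x g⁻¹) fun _ _ ⟨h, hy⟩ => ⟨h, by rw [hy, A.smul_rmul]⟩
  one_smul o := Quotient.inductionOn o fun x => by
    show A.leftOrbit (A.rmul x 1⁻¹) = A.leftOrbit x
    rw [inv_one, A.rmul_one]
  mul_smul g₁ g₂ o := Quotient.inductionOn o fun x => by
    show A.leftOrbit (A.rmul x (g₁ * g₂)⁻¹) = A.leftOrbit (A.rmul (A.rmul x g₂⁻¹) g₁⁻¹)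
    rw [mul_inv_rev, A.rmul_rmul]

lemma smul_leftOrbit (g : G) (x : X) : g • A.leftOrbit x = A.leftOrbit (A.rmul x g⁻¹) := rfl

def fixOrbits (P : Subgroup G) (φ : P →* H) : Set A.leftOrbits := A.leftOrbit '' A.Fix P φ

end Orbits

section Counting

variable {P : Subgroup G} (φ : P →* H)

lemma card_fiber_leftOrbit (hL : A.LeftFree) {x : X} (hx : x ∈ A.Fix P φ) :
    Nat.card {y : A.Fix P φ // A.leftOrbit y = A.leftOrbit x} =
      Nat.card (Subgroup.centralizer ((φ.range : Subgroup H) : Set H)) := by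
  refine (Nat.card_congr (Equiv.ofBijective
    (fun c => ⟨⟨A.smul c x, (A.smul_mem_fix_self_iff hL hx c).2 c.2⟩, A.leftOrbit_smul c x⟩)
    ⟨fun c d hcd => Subtype.ext (hL.smul_left_cancel (congrArg (fun y => y.1.1) hcd)), ?_⟩)).symm
  rintro ⟨⟨y, hy⟩, hyx⟩
  obtain ⟨h, rfl⟩ := (A.leftOrbit_eq_leftOrbit_iff).1 hyx.symm
  exact ⟨⟨h, (A.smul_mem_fix_self_iff hL hx h).1 hy⟩, rfl⟩

lemma card_fix_eq_card_centralizer_mul [Finite X] (hL : A.LeftFree) :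
    Nat.card (A.Fix P φ) =
      Nat.card (Subgroup.centralizer ((φ.range : Subgroup H) : Set H)) *
        (A.fixOrbits P φ).ncard := by
  let π : A.Fix P φ → A.fixOrbits P φ := fun x => ⟨A.leftOrbit x, x, x.2, rfl⟩
  have hfiber (o : A.fixOrbits P φ) : Nat.card {x // π x = o} =
      Nat.card (Subgroup.centralizer ((φ.range : Subgroup H) : Set H)) := by
    obtain ⟨_, x, hx, rfl⟩ := o
    rw [← A.card_fiber_leftOrbit φ hL hx]
    exact Nat.card_congr (Equiv.subtypeEquivRight fun y => Subtype.ext_iff)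
  have := Fintype.ofFinite (A.fixOrbits P φ)
  rw [← Nat.card_congr (Equiv.sigmaFiberEquiv π), Nat.card_sigma, Finset.sum_congr rfl
    fun o _ => hfiber o, Finset.sum_const, Finset.card_univ, smul_eq_mul, mul_comm,
    ← Nat.card_eq_fintype_card, Nat.card_coe_set_eq]

lemma card_centralizer_dvd_card_fix [Finite X] (hL : A.LeftFree) :
    Nat.card (Subgroup.centralizer ((φ.range : Subgroup H) : Set H)) ∣ Nat.card (A.Fix P φ) :=
  ⟨_, A.card_fix_eq_card_centralizer_mul φ hL⟩

lemma card_fix_div_card_centralizer [Finite H] [Finite X] (hL : A.LeftFree) :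
    Nat.card (A.Fix P φ) / Nat.card (Subgroup.centralizer ((φ.range : Subgroup H) : Set H)) =
      (A.fixOrbits P φ).ncard := by
  rw [A.card_fix_eq_card_centralizer_mul φ hL, Nat.mul_div_cancel_left _ Nat.card_pos]

end Counting

section QuotientAction

variable {P Q : Subgroup G}

lemma smul_leftOrbit_eq_of_mem_fix {ψ : Q →* H} {x : X} (hx : x ∈ A.Fix Q ψ) (q : Q) :
    q • A.leftOrbit x = A.leftOrbit x := by
  rw [Subgroup.smul_def, smul_leftOrbit, ← Subgroup.coe_inv, hx, leftOrbit_smul]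

lemma exists_mem_fix_of_forall_smul_eq (hL : A.LeftFree) {x : X}
    (hx : ∀ q : Q, q • A.leftOrbit x = A.leftOrbit x) : ∃ ψ : Q →* H, x ∈ A.Fix Q ψ := by
  have hstab (q : Q) : ∃ h : H, A.rmul x q = A.smul h x := by
    obtain ⟨h, hh⟩ := (A.leftOrbit_eq_leftOrbit_iff).1 (hx q⁻¹).symm
    exact ⟨h, by simpa only [Subgroup.coe_inv, inv_inv] using hh⟩
  choose ψ hψ using hstab
  refine ⟨MonoidHom.mk' ψ fun a b => hL.smul_left_cancel (x := x) ?_, hψ⟩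
  rw [← hψ, Subgroup.coe_mul, ← A.rmul_rmul, hψ, A.smul_rmul, hψ, A.smul_smul]

lemma smul_mem_fixOrbits (hPQ : P ≤ Q) (hQ : Q ≤ Subgroup.normalizer (P : Set G)) (φ : Q →* H)
    {o : A.leftOrbits} (ho : o ∈ A.fixOrbits P (φ.comp (Subgroup.inclusion hPQ))) (q : Q) :
    q • o ∈ A.fixOrbits P (φ.comp (Subgroup.inclusion hPQ)) := by
  obtain ⟨x, hx, rfl⟩ := ho
  refine ⟨A.smul (φ q) (A.rmul x (q : G)⁻¹), fun u => ?_, A.leftOrbit_smul _ _⟩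
  have hu : (q : G)⁻¹ * u * q ∈ P := by
    simpa using (Subgroup.mem_normalizer_iff.1 (hQ (inv_mem q.2)) u).1 u.2
  have hφu : (φ.comp (Subgroup.inclusion hPQ)) ⟨_, hu⟩ =
      (φ q)⁻¹ * φ.comp (Subgroup.inclusion hPQ) u * φ q := by
    simp only [MonoidHom.comp_apply]
    rw [← map_inv, ← map_mul, ← map_mul]
    rfl
  calc A.rmul (A.smul (φ q) (A.rmul x (q : G)⁻¹)) u
      = A.smul (φ q) (A.rmul (A.rmul x ((q : G)⁻¹ * u * q)) (q : G)⁻¹) := by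
        rw [A.smul_rmul, A.rmul_rmul, A.rmul_rmul, mul_inv_cancel_right]
    _ = _ := by
        rw [hx ⟨_, hu⟩, hφu, A.smul_rmul, A.smul_smul, A.smul_smul]
        congr 1
        group

def fixOrbitsSubMulAction (hPQ : P ≤ Q) (hQ : Q ≤ Subgroup.normalizer (P : Set G)) (φ : Q →* H) :
    SubMulAction Q A.leftOrbits where
  carrier := A.fixOrbits P (φ.comp (Subgroup.inclusion hPQ))
  smul_mem' q _ ho := A.smul_mem_fixOrbits hPQ hQ φ ho q

theorem ncard_fixOrbits_modEq [Finite X] {p : ℕ} [Fact p.Prime] (hQp : IsPGroup p Q)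
    (hPQ : P ≤ Q) (hQ : Q ≤ Subgroup.normalizer (P : Set G)) (φ : Q →* H) :
    (A.fixOrbits P (φ.comp (Subgroup.inclusion hPQ))).ncard ≡
      {o | o ∈ A.fixOrbits P (φ.comp (Subgroup.inclusion hPQ)) ∧ ∀ q : Q, q • o = o}.ncard
        [MOD p] := by
  set N := A.fixOrbitsSubMulAction hPQ hQ φ
  let e : MulAction.fixedPoints Q N ≃ {o | o ∈ N ∧ ∀ q : Q, q • o = o} :=
    { toFun := fun o => ⟨o.1.1, o.1.2, fun q => congrArg Subtype.val (o.2 q)⟩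
      invFun := fun o => ⟨⟨o.1, o.2.1⟩, fun q => Subtype.ext (o.2.2 q)⟩ }
  have := hQp.card_modEq_card_fixedPoints N
  rw [Nat.card_congr e] at this
  exact this

lemma fixOrbits_subset_of_conj {ψ ψ' : Q →* H} {h : H} (hψ : ∀ u, ψ' u = h * ψ u * h⁻¹) :
    A.fixOrbits Q ψ ⊆ A.fixOrbits Q ψ' := by
  rintro _ ⟨x, hx, rfl⟩
  exact ⟨A.smul h x, A.smul_mem_fix hx h hψ, A.leftOrbit_smul h x⟩

lemma exists_conj_of_not_disjoint_fixOrbits (hL : A.LeftFree) {ψ₁ ψ₂ : Q →* H}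
    (hψ : ¬Disjoint (A.fixOrbits Q ψ₁) (A.fixOrbits Q ψ₂)) :
    ∃ h : H, ∀ u, ψ₂ u = h * ψ₁ u * h⁻¹ := by
  obtain ⟨_, ⟨x₁, hx₁, rfl⟩, x₂, hx₂, hx⟩ := Set.not_disjoint_iff.1 hψ
  obtain ⟨h, rfl⟩ := (A.leftOrbit_eq_leftOrbit_iff).1 hx.symm
  exact ⟨h, (A.smul_mem_fix_iff hL hx₁ h).1 hx₂⟩

lemma ncard_biUnion_fixOrbits [Finite X] (hL : A.LeftFree) {R : Finset (Q →* H)}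
    (hR : ∀ ψ ∈ R, ∀ ψ' ∈ R, (∃ h : H, ∀ u, ψ' u = h * ψ u * h⁻¹) → ψ = ψ') :
    (⋃ ψ ∈ R, A.fixOrbits Q ψ).ncard = ∑ ψ ∈ R, (A.fixOrbits Q ψ).ncard := by
  rw [← Finset.set_biUnion_coe, Set.Finite.ncard_biUnion R.finite_toSet
    (fun _ _ => Set.toFinite _), finsum_mem_coe_finset]
  intro ψ hψ ψ' hψ' hne
  by_contra hmeet
  exact hne (hR ψ hψ ψ' hψ' (A.exists_conj_of_not_disjoint_fixOrbits hL hmeet))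

end QuotientAction

end

section SelfBiset

variable {S : Type*} [Group S] (A : BisetAction S S X) {P Q : Subgroup S}

lemma fixOrbits_subset_of_restrictionSConj (hPQ : P ≤ Q) {ψ : Q →* S} {φ : P →* S}
    (h : RestrictionSConj hPQ ψ φ) : A.fixOrbits Q ψ ⊆ A.fixOrbits P φ := by
  obtain ⟨s, hs⟩ := h
  rintro _ ⟨x, hx, rfl⟩
  refine ⟨A.smul s⁻¹ x, A.smul_mem_fix (A.mem_fix_comp_inclusion hPQ hx) s⁻¹ fun u => ?_,
    A.leftOrbit_smul _ _⟩
  rw [MonoidHom.comp_apply, show ψ (Subgroup.inclusion hPQ u) = _ from hs u u.2]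
  group

theorem setOf_mem_fixOrbits_fixed_eq_biUnion (hA : A.Bifree) (hPQ : P ≤ Q) {φ : P →* S}
    {R : Finset (Q →* S)} (hRres : ∀ ψ ∈ R, RestrictionSConj hPQ ψ φ)
    (hRcover : ∀ ψ : Q →* S, Function.Injective ψ → RestrictionSConj hPQ ψ φ →
      ∃ ψ' ∈ R, HomSConj ψ ψ') :
    {o | o ∈ A.fixOrbits P φ ∧ ∀ q : Q, q • o = o} = ⋃ ψ ∈ R, A.fixOrbits Q ψ := by
  ext o
  simp only [Set.mem_ofPred_eq, Set.mem_iUnion, exists_prop]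
  constructor
  · rintro ⟨⟨x, hx, rfl⟩, hfixed⟩
    obtain ⟨ψ, hψ⟩ := A.exists_mem_fix_of_forall_smul_eq hA.1 hfixed
    have hres : RestrictionSConj hPQ ψ φ := by
      refine ⟨1, fun u hu =>
        (A.smul_mem_fix_iff (ψ := ψ.comp (Subgroup.inclusion hPQ)) hA.1 hx 1).1 ?_ ⟨u, hu⟩⟩
      rw [A.one_smul]
      exact A.mem_fix_comp_inclusion hPQ hψ
    obtain ⟨ψ', hψ'R, s, hs⟩ := hRcover ψ (A.injective_of_mem_fix hA.2 hψ) hres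
    exact ⟨ψ', hψ'R, A.fixOrbits_subset_of_conj hs ⟨x, hψ, rfl⟩⟩
  · rintro ⟨ψ, hψR, ho⟩
    refine ⟨A.fixOrbits_subset_of_restrictionSConj hPQ (hRres ψ hψR) ho, fun q => ?_⟩
    obtain ⟨x, hx, rfl⟩ := ho
    exact A.smul_leftOrbit_eq_of_mem_fix hx q

end SelfBiset

end BisetAction

theorem fixedPoint_extension_congruence_general
    (p : ℕ) (hp : p.Prime) (S : Type*) [Group S] [Finite S] (hS : IsPGroup p S)
    (X : Type*) [Finite X] (A : BisetAction S S X) (hA : A.Bifree)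
    (P Q : Subgroup S) (hPQ : P < Q) (hidx : P.relIndex Q = p)
    (φ : P →* S)
    (hext : ∃ φ' : Q →* S, ∀ (u : S) (hu : u ∈ P), φ' ⟨u, hPQ.le hu⟩ = φ ⟨u, hu⟩)
    (R : Finset (Q →* S))
    (hRres : ∀ ψ ∈ R, RestrictionSConj hPQ.le ψ φ)
    (hRcover : ∀ ψ : Q →* S, Function.Injective ψ → RestrictionSConj hPQ.le ψ φ →
      ∃ ψ' ∈ R, HomSConj ψ ψ')
    (hRunique : ∀ ψ ∈ R, ∀ ψ' ∈ R, HomSConj ψ ψ' → ψ = ψ') :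
    Nat.card (Subgroup.centralizer ((φ.range : Subgroup S) : Set S)) ∣
        Nat.card (A.Fix P φ) ∧
    (∀ ψ ∈ R, Nat.card (Subgroup.centralizer ((ψ.range : Subgroup S) : Set S)) ∣
        Nat.card (A.Fix Q ψ)) ∧
    Nat.card (A.Fix P φ) /
        Nat.card (Subgroup.centralizer ((φ.range : Subgroup S) : Set S)) ≡
      (∑ ψ ∈ R, Nat.card (A.Fix Q ψ) /
        Nat.card (Subgroup.centralizer ((ψ.range : Subgroup S) : Set S))) [MOD p] := by
  have : Fact p.Prime := ⟨hp⟩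
  obtain ⟨φ', hφ'⟩ := hext
  have hφ : φ = φ'.comp (Subgroup.inclusion hPQ.le) :=
    MonoidHom.ext fun u => (hφ' u u.2).symm
  have hQ : Q ≤ Subgroup.normalizer (P : Set S) :=
    (Subgroup.normal_subgroupOf_iff_le_normalizer hPQ.le).1
      ((hS.to_subgroup Q).normal_of_index_eq hp hidx)
  refine ⟨A.card_centralizer_dvd_card_fix φ hA.1,
    fun ψ _ => A.card_centralizer_dvd_card_fix ψ hA.1, ?_⟩
  rw [A.card_fix_div_card_centralizer φ hA.1,
    Finset.sum_congr rfl fun ψ _ => A.card_fix_div_card_centralizer ψ hA.1,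
    ← A.ncard_biUnion_fixOrbits hA.1 hRunique,
    ← A.setOf_mem_fixOrbits_fixed_eq_biUnion hA hPQ.le hRres hRcover, hφ]
  exact A.ncard_fixOrbits_modEq (hS.to_subgroup Q) hPQ.le hQ φ'

/-- Let `S` be a finite `p`-group, `X` a finite bifree `(S,S)`-biset,
`P < Q ≤ S` with `P` of index `p` in `Q`, and `φ : P → S` an injective homomorphism
which extends to a group homomorphism `Q → S`.  Then
`|X^{(P,φ)}|/|C_S(φ(P))| ≡ ∑_{[ψ]} |X^{(Q,ψ)}|/|C_S(ψ(Q))| (mod p)`, the sum being over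
representatives of the `S`-conjugacy classes of injective homomorphisms `ψ : Q → S`
whose restriction to `P` is `S`-conjugate to `φ` (all displayed quotients are exact). -/
theorem fixedPoint_extension_congruence
    (p : ℕ) (hp : p.Prime) (S : Type*) [Group S] [Finite S] (hS : IsPGroup p S)
    (X : Type*) [Finite X] (A : BisetAction S S X) (hA : A.Bifree)
    (P Q : Subgroup S) (hPQ : P < Q) (hidx : P.relIndex Q = p)
    (φ : P →* S) (hφ : Function.Injective φ)
    (hext : ∃ φ' : Q →* S, ∀ (u : S) (hu : u ∈ P), φ' ⟨u, hPQ.le hu⟩ = φ ⟨u, hu⟩)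
    (R : Finset (Q →* S))
    (hRinj : ∀ ψ ∈ R, Function.Injective ψ)
    (hRres : ∀ ψ ∈ R, RestrictionSConj hPQ.le ψ φ)
    (hRcover : ∀ ψ : Q →* S, Function.Injective ψ → RestrictionSConj hPQ.le ψ φ →
      ∃ ψ' ∈ R, HomSConj ψ ψ')
    (hRunique : ∀ ψ ∈ R, ∀ ψ' ∈ R, HomSConj ψ ψ' → ψ = ψ') :
    Nat.card (Subgroup.centralizer ((φ.range : Subgroup S) : Set S)) ∣
        Nat.card (A.Fix P φ) ∧
    (∀ ψ ∈ R, Nat.card (Subgroup.centralizer ((ψ.range : Subgroup S) : Set S)) ∣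
        Nat.card (A.Fix Q ψ)) ∧
    Nat.card (A.Fix P φ) /
        Nat.card (Subgroup.centralizer ((φ.range : Subgroup S) : Set S)) ≡
      (∑ ψ ∈ R, Nat.card (A.Fix Q ψ) /
        Nat.card (Subgroup.centralizer ((ψ.range : Subgroup S) : Set S))) [MOD p] :=
  fixedPoint_extension_congruence_general p hp S hS X A hA P Q hPQ hidx φ hext R hRres hRcover
    hRunique
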